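/- arXiv:2507.00211 — 2 statements merged into one kernel-verified Lean document; each statement's English description precedes it below -/
import Mathlib

section
/- Let K be a totally real number field of degree d with real embeddings σ₁ = id, σ₂ = σ, σ₃, …, σ_d. Suppose t, s ∈ (2, T] are distinct algebraic integers of K satisfying |σ(t)| < 2·t^(1-δ), |σ(s)| < 2·s^(1-δ), and |σⱼ(t)|, |σⱼ(s)| ≤ 2 for j ≥ 3, for some 0 < δ < 1. Then |t - s| > c·T^(δ-1), where c > 0 is a constant depending only on d (one may take c = 1/(4^(d-2)·4)). -/
/-- If all embeddings `K →+* ℂ` come from real embeddings enumerated by `σ`,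
then the norm (as a real number) is the product of the `σ j x`. -/
lemma norm_eq_prod_real_embeddings (K : Type*) [Field K] [NumberField K] (d : ℕ)
    (hdeg : d = Module.finrank ℚ K)
    (σ : Fin d → (K →+* ℝ)) (hinj : Function.Injective σ)
    (hall : ∀ f : K →+* ℝ, ∃ j, f = σ j) (x : K) :
    ((Algebra.norm ℚ x : ℚ) : ℝ) = ∏ j : Fin d, σ j x := by
  have hσbij : Function.Bijective σ := ⟨hinj, fun f => (hall f).imp fun j hj => hj.symm⟩
  -- the map from real embeddings to complex embeddings
  let r : (K →+* ℝ) → (K →+* ℂ) := fun f => Complex.ofRealHom.comp f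
  have hrinj : Function.Injective r := fun f g h => by
    ext a
    have := RingHom.congr_fun h a
    simp only [r, RingHom.coe_comp, Function.comp_apply, Complex.ofRealHom_eq_coe] at this
    exact_mod_cast this
  have hcard : Fintype.card (K →+* ℝ) = Fintype.card (K →+* ℂ) := by
    rw [NumberField.Embeddings.card K ℂ, ← hdeg,
      ← Fintype.card_fin d]
    exact (Fintype.card_of_bijective hσbij).symm
  have hrbij : Function.Bijective r := (Fintype.bijective_iff_injective_and_card r).2
    ⟨hrinj, hcard⟩
  have hbij : Function.Bijective (fun j : Fin d => r (σ j)) := hrbij.comp hσbij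
  have h1 : algebraMap ℚ ℂ ((Algebra.norm ℚ) x) = ∏ φ : K →+* ℂ, φ x := by
    rw [Algebra.norm_eq_prod_embeddings ℚ ℂ x]
    exact (Fintype.prod_equiv (RingHom.equivRatAlgHom K ℂ) (fun φ : K →+* ℂ => φ x)
      (fun ψ : K →ₐ[ℚ] ℂ => ψ x) (fun φ => by simp [RingHom.equivRatAlgHom_apply])).symm
  have h2 : ∏ φ : K →+* ℂ, φ x = ∏ j : Fin d, ((σ j x : ℝ) : ℂ) :=
    (Fintype.prod_bijective _ hbij _ (fun φ => φ x) (fun j => rfl)).symm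
  have h3 : ((((Algebra.norm ℚ x : ℚ) : ℝ)) : ℂ) = ((∏ j : Fin d, σ j x : ℝ) : ℂ) := by
    push_cast
    rw [← h2, ← h1]
    simp [algebraMap, Complex.ofReal_ratCast]
  exact_mod_cast h3

/-- Separation of traces: with K totally real of degree d, embeddings σ 0 = id,
σ 1 = σ, …, and distinct algebraic integers t, s of K lying (under σ 0) in (2, T]
with |σ 1 t| < 2·t^(1-δ), |σ 1 s| < 2·s^(1-δ) and the other embeddings bounded by 2,
we have |t - s| > c·T^(δ-1) with c = 1/(4^(d-2)·4). -/
theorem stmt_6 (K : Type*) [Field K] [NumberField K] (d : ℕ) (hd : 2 ≤ d)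
    (hdeg : d = Module.finrank ℚ K)
    (σ : Fin d → (K →+* ℝ)) (hinj : Function.Injective σ)
    (hall : ∀ f : K →+* ℝ, ∃ j, f = σ j)
    (t s : K) (hintt : IsIntegral ℤ t) (hints : IsIntegral ℤ s) (hts : t ≠ s)
    (T δ : ℝ) (hδ0 : 0 < δ) (hδ1 : δ < 1)
    (ht2 : 2 < σ ⟨0, by omega⟩ t) (htT : σ ⟨0, by omega⟩ t ≤ T)
    (hs2 : 2 < σ ⟨0, by omega⟩ s) (hsT : σ ⟨0, by omega⟩ s ≤ T)
    (hσt : |σ ⟨1, by omega⟩ t| < 2 * (σ ⟨0, by omega⟩ t) ^ (1 - δ))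
    (hσs : |σ ⟨1, by omega⟩ s| < 2 * (σ ⟨0, by omega⟩ s) ^ (1 - δ))
    (hj : ∀ j : Fin d, 2 ≤ (j : ℕ) → |σ j t| ≤ 2 ∧ |σ j s| ≤ 2) :
    (1 / (4 ^ (d - 2) * 4)) * T ^ (δ - 1) < |σ ⟨0, by omega⟩ t - σ ⟨0, by omega⟩ s| := by
  set i0 : Fin d := ⟨0, by omega⟩
  set i1 : Fin d := ⟨1, by omega⟩
  set x : K := t - s with hx
  have hx0 : x ≠ 0 := sub_ne_zero.mpr hts
  have hxint : IsIntegral ℤ x := hintt.sub hints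
  -- the norm is a nonzero rational integer, hence has absolute value ≥ 1
  have hnint : IsIntegral ℤ (Algebra.norm ℚ x) := Algebra.isIntegral_norm ℚ hxint
  obtain ⟨m, hm⟩ := IsIntegrallyClosed.isIntegral_iff.mp hnint
  have hn0 : Algebra.norm ℚ x ≠ 0 := by
    rw [Algebra.norm_ne_zero_iff]
    exact hx0
  have hm0 : m ≠ 0 := by
    rintro rfl; simp at hm; exact hn0 hm.symm
  have hm' : ((m : ℚ)) = Algebra.norm ℚ x := by rw [← hm]; simp
  have h1m : (1 : ℤ) ≤ |m| := Int.one_le_abs hm0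
  have hnorm1 : (1 : ℝ) ≤ |((Algebra.norm ℚ x : ℚ) : ℝ)| := by
    rw [← hm']
    push_cast
    exact_mod_cast h1m
  have hprod := norm_eq_prod_real_embeddings K d hdeg σ hinj hall x
  rw [hprod, Finset.abs_prod] at hnorm1
  -- split off the first two factors
  have hmem1 : i1 ∈ (Finset.univ.erase i0) := by
    simp [i0, i1, Fin.ext_iff]
  have hsplit : ∏ j : Fin d, |σ j x| =
      |σ i0 x| * (|σ i1 x| * ∏ j ∈ (Finset.univ.erase i0).erase i1, |σ j x|) := by
    rw [← Finset.mul_prod_erase Finset.univ _ (Finset.mem_univ i0),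
      ← Finset.mul_prod_erase _ _ hmem1]
  rw [hsplit] at hnorm1
  set A := |σ i0 x| with hA
  set B := |σ i1 x| with hB
  set P := ∏ j ∈ (Finset.univ.erase i0).erase i1, |σ j x| with hP
  have hT2 : (2 : ℝ) < T := lt_of_lt_of_le ht2 htT
  have hT0 : (0 : ℝ) < T := by linarith
  have h1δ : (0 : ℝ) ≤ 1 - δ := by linarith
  -- bound P
  have hPle : P ≤ 4 ^ (d - 2) := by
    have hcard : ((Finset.univ.erase i0).erase i1).card = d - 2 := by
      rw [Finset.card_erase_of_mem hmem1, Finset.card_erase_of_mem (Finset.mem_univ i0),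
        Finset.card_univ, Fintype.card_fin]
      omega
    calc P ≤ ∏ _j ∈ (Finset.univ.erase i0).erase i1, (4 : ℝ) := by
            apply Finset.prod_le_prod (fun j _ => abs_nonneg _)
            intro j hjmem
            have hj0 : j ≠ i1 := (Finset.mem_erase.mp hjmem).1
            have hj1 : j ≠ i0 := (Finset.mem_erase.mp (Finset.mem_erase.mp hjmem).2).1
            have hj2 : 2 ≤ (j : ℕ) := by
              rcases j with ⟨jv, hjv⟩
              simp only [i0, i1, Fin.ext_iff, Ne] at hj0 hj1
              simpa using by omega
            obtain ⟨hjt, hjs⟩ := hj j hj2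
            calc |σ j x| = |σ j t - σ j s| := by rw [hx, map_sub]
              _ ≤ |σ j t| + |σ j s| := abs_sub _ _
              _ ≤ 4 := by linarith
      _ = 4 ^ (d - 2) := by rw [Finset.prod_const, hcard]
  -- bound B
  have htpow : (σ i0 t) ^ (1 - δ) ≤ T ^ (1 - δ) :=
    Real.rpow_le_rpow (by linarith) htT h1δ
  have hspow : (σ i0 s) ^ (1 - δ) ≤ T ^ (1 - δ) :=
    Real.rpow_le_rpow (by linarith) hsT h1δ
  have hBlt : B < 4 * T ^ (1 - δ) := by
    calc B = |σ i1 t - σ i1 s| := by rw [hB, hx, map_sub]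
      _ ≤ |σ i1 t| + |σ i1 s| := abs_sub _ _
      _ < 2 * (σ i0 t) ^ (1 - δ) + 2 * (σ i0 s) ^ (1 - δ) := by
          exact add_lt_add hσt hσs
      _ ≤ 4 * T ^ (1 - δ) := by linarith
  have hTpow0 : (0 : ℝ) < T ^ (1 - δ) := Real.rpow_pos_of_pos hT0 _
  have h4d0 : (0 : ℝ) < 4 ^ (d - 2) := by positivity
  have hA0 : 0 < A := by
    rw [hA]
    apply abs_pos.mpr
    rw [hx, map_sub, sub_ne_zero]
    exact fun h => hts ((σ i0).injective h)
  -- combine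
  have hBP : B * P < 4 * T ^ (1 - δ) * 4 ^ (d - 2) := by
    calc B * P ≤ B * 4 ^ (d - 2) :=
          mul_le_mul_of_nonneg_left hPle (abs_nonneg _)
      _ < 4 * T ^ (1 - δ) * 4 ^ (d - 2) := by
          exact mul_lt_mul_of_pos_right hBlt h4d0
  have hkey : 1 < A * (4 * T ^ (1 - δ) * 4 ^ (d - 2)) :=
    lt_of_le_of_lt hnorm1 (mul_lt_mul_of_pos_left hBP hA0)
  have hM0 : 0 < 4 * T ^ (1 - δ) * 4 ^ (d - 2) := by positivity
  have hfinal : 1 / (4 * T ^ (1 - δ) * 4 ^ (d - 2)) < A := by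
    rw [div_lt_iff₀ hM0]
    linarith [hkey]
  have heq : (1 / (4 ^ (d - 2) * 4)) * T ^ (δ - 1)
      = 1 / (4 * T ^ (1 - δ) * 4 ^ (d - 2)) := by
    have : T ^ (δ - 1) = (T ^ (1 - δ))⁻¹ := by
      rw [← Real.rpow_neg (le_of_lt hT0)]
      ring_nf
    rw [this]
    field_simp
  rw [heq, show (σ i0) t - (σ i0) s = (σ i0) x from (map_sub _ _ _).symm]
  exact hfinal
end

section
/- Let γ and γ^σ be hyperbolic isometries of ℍ with translation lengths ℓ and ℓ_σ respectively, and suppose ℓ_σ ≤ (1-δ)·ℓ for some 0 < δ < 1, where ℓ = 2·arcosh(|tr γ|/2) with |tr γ| > 2 and ℓ_σ = 2·arcosh(|tr γ^σ|/2). Then |tr γ^σ| < 2·|tr γ|^(1-δ). -/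
noncomputable def arcosh (x : ℝ) : ℝ := Real.log (x + Real.sqrt (x ^ 2 - 1))

lemma key (s t δ : ℝ) (hs : 2 < s) (ht : 2 < t) (hδ0 : 0 < δ) (hδ1 : δ < 1)
    (h : 2 * arcosh (s / 2) ≤ (1 - δ) * (2 * arcosh (t / 2))) :
    s < 2 * t ^ (1 - δ) := by
  have hsq : 0 < (s/2)^2 - 1 := by nlinarith
  have htq : 0 ≤ (t/2)^2 - 1 := by nlinarith
  have hssqrt := Real.sqrt_pos.mpr hsq
  have hspos : 0 < s / 2 + Real.sqrt ((s/2)^2 - 1) := by linarith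
  -- s/2 < exp (arcosh (s/2))
  have h1 : s / 2 < Real.exp (arcosh (s/2)) := by
    rw [arcosh, Real.exp_log hspos]; linarith
  -- arcosh (t/2) ≤ log t
  have h2 : arcosh (t/2) ≤ Real.log t := by
    rw [arcosh]
    apply Real.log_le_log (by positivity)
    have : Real.sqrt ((t/2)^2 - 1) ≤ t/2 := by
      calc Real.sqrt ((t/2)^2 - 1) ≤ Real.sqrt ((t/2)^2) :=
            Real.sqrt_le_sqrt (by linarith)
        _ = t/2 := Real.sqrt_sq (by linarith)
    linarith
  have h3 : arcosh (s/2) ≤ (1 - δ) * arcosh (t/2) := by linarith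
  have h4 : (1 - δ) * arcosh (t/2) ≤ (1 - δ) * Real.log t := by
    apply mul_le_mul_of_nonneg_left h2 (by linarith)
  have h5 : Real.exp ((1 - δ) * Real.log t) = t ^ (1 - δ) := by
    rw [Real.rpow_def_of_pos (by linarith), mul_comm]
  calc s = 2 * (s/2) := by ring
    _ < 2 * Real.exp (arcosh (s/2)) := by linarith
    _ ≤ 2 * Real.exp ((1 - δ) * Real.log t) := by
        have := Real.exp_le_exp.mpr (h3.trans h4); linarith
    _ = 2 * t ^ (1 - δ) := by rw [h5]

/-- Core trace inequality: if γ and γ^σ are hyperbolic (|tr| > 2) with translation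
lengths ℓ = 2·arcosh(|tr γ|/2) and ℓ_σ = 2·arcosh(|tr γ^σ|/2), and
ℓ_σ ≤ (1-δ)·ℓ for some 0 < δ < 1, then |tr γ^σ| < 2·|tr γ|^(1-δ). -/
theorem stmt_14 (γ γσ : Matrix.SpecialLinearGroup (Fin 2) ℝ)
    (hγ : 2 < |Matrix.trace (γ : Matrix (Fin 2) (Fin 2) ℝ)|)
    (hγσ : 2 < |Matrix.trace (γσ : Matrix (Fin 2) (Fin 2) ℝ)|)
    (δ : ℝ) (hδ0 : 0 < δ) (hδ1 : δ < 1)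
    (hcomp : 2 * arcosh (|Matrix.trace (γσ : Matrix (Fin 2) (Fin 2) ℝ)| / 2) ≤
      (1 - δ) * (2 * arcosh (|Matrix.trace (γ : Matrix (Fin 2) (Fin 2) ℝ)| / 2))) :
    |Matrix.trace (γσ : Matrix (Fin 2) (Fin 2) ℝ)| <
      2 * |Matrix.trace (γ : Matrix (Fin 2) (Fin 2) ℝ)| ^ (1 - δ) := by
  exact key _ _ _ hγσ hγ hδ0 hδ1 hcomp
end
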